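/- Define η_n^{i,1} := 0 for n ≤ 1 and, for n ≥ 2 and i ∈ {0,1}, η_n^{i,1} := (1/H)(n log n − E[I_n^i log I_n^i + (n − I_n^i) log(n − I_n^i)]) + π_{1−i} ((H_{1−i} − H_i)/H) n + ((H_1 − H_0)/((p_{01}+p_{10})H)) p_{i0} p_{i1}^{n−1} n, where I_n^i is binomial B(n, p_{i0}) distributed and 0 log 0 := 0, and set η_n^{i,2} := n − η_n^{i,1} for n ≥ 2 (and η_n^{i,2} := 0 for n ≤ 1). Then η_n^{i,2} = O(log n) as n → ∞, for both i ∈ {0,1}. -/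

import Mathlib

/-!
For `I ~ B(n, p)` and `q = 1 - p`, put `D = I log (I / (n p)) + (n - I) log ((n - I) / (n q))`, so that
`n log n - E[I log I + (n - I) log (n - I)] = n h(p) - E[D]` with `h` the binary entropy.
The tangent-line bounds `x - μ ≤ x log (x / μ) ≤ (x - μ) + (x - μ)² / μ` give
`0 ≤ D ≤ (I - n p)² / (n p q)`, hence `0 ≤ E[D] ≤ 1` by the binomial variance.
Since `H_i + π_{1-i} (H_{1-i} - H_i) = H`, the linear terms of `η_n^{i,1}` add up to exactly `n`,
and `η_n^{i,2} = E[D] / H - c n p_{i1}^{n-1}` is in fact bounded.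
-/

open Filter Asymptotics Real

/-- Expectation of `a` under the binomial distribution `B(n, p)`. -/
noncomputable def binomExp (p : ℝ) (n : ℕ) (a : ℕ → ℝ) : ℝ :=
  ∑ k ∈ Finset.range (n + 1), (n.choose k : ℝ) * p ^ k * (1 - p) ^ (n - k) * a k

open Finset Topology

section binomExp

variable {p : ℝ} {n : ℕ}

lemma binomExp_eq_sum_eval_bernsteinPolynomial (p : ℝ) (n : ℕ) (a : ℕ → ℝ) :
    binomExp p n a = ∑ k ∈ range (n + 1), a k * (bernsteinPolynomial ℝ n k).eval p := by
  simp only [binomExp, bernsteinPolynomial, Polynomial.eval_mul, Polynomial.eval_pow,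
    Polynomial.eval_natCast, Polynomial.eval_X, Polynomial.eval_sub, Polynomial.eval_one]
  exact sum_congr rfl fun k _ => by ring

lemma binomExp_mono (hp₀ : 0 ≤ p) (hp₁ : p ≤ 1) {a b : ℕ → ℝ} (h : ∀ k ≤ n, a k ≤ b k) :
    binomExp p n a ≤ binomExp p n b := by
  have hq : 0 ≤ 1 - p := sub_nonneg.2 hp₁
  exact sum_le_sum fun k hk =>
    mul_le_mul_of_nonneg_left (h k (Nat.lt_succ_iff.1 (mem_range.1 hk))) (by positivity)

lemma binomExp_add (p : ℝ) (n : ℕ) (a b : ℕ → ℝ) :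
    binomExp p n (fun k => a k + b k) = binomExp p n a + binomExp p n b := by
  simp only [binomExp, mul_add, sum_add_distrib]

lemma binomExp_const_mul (p : ℝ) (n : ℕ) (c : ℝ) (a : ℕ → ℝ) :
    binomExp p n (fun k => c * a k) = c * binomExp p n a := by
  simp only [binomExp, mul_sum]
  exact sum_congr rfl fun k _ => by ring

lemma binomExp_const (p : ℝ) (n : ℕ) (c : ℝ) : binomExp p n (fun _ => c) = c := by
  have h := congrArg (Polynomial.eval p) (bernsteinPolynomial.sum ℝ n)
  rw [Polynomial.eval_finsetSum, Polynomial.eval_one] at h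
  rw [binomExp_eq_sum_eval_bernsteinPolynomial, ← mul_sum, h, mul_one]

lemma binomExp_natCast (p : ℝ) (n : ℕ) : binomExp p n (fun k => (k : ℝ)) = n * p := by
  have h := congrArg (Polynomial.eval p) (bernsteinPolynomial.sum_smul ℝ n)
  simpa [Polynomial.eval_finsetSum, binomExp_eq_sum_eval_bernsteinPolynomial] using h

lemma binomExp_affine (p : ℝ) (n : ℕ) (a b : ℝ) :
    binomExp p n (fun k => a + b * k) = a + b * (n * p) := by
  rw [binomExp_add p n (fun _ => a) (fun k => b * k), binomExp_const, binomExp_const_mul,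
    binomExp_natCast]

lemma binomExp_sub_mean_sq (p : ℝ) (n : ℕ) :
    binomExp p n (fun k => ((k : ℝ) - n * p) ^ 2) = n * p * (1 - p) := by
  have h := congrArg (Polynomial.eval p) (bernsteinPolynomial.variance ℝ n)
  simp only [Polynomial.eval_finsetSum, Polynomial.eval_mul, Polynomial.eval_pow,
    Polynomial.eval_sub, Polynomial.eval_X, Polynomial.eval_natCast,
    Polynomial.eval_one, nsmul_eq_mul] at h
  rw [binomExp_eq_sum_eval_bernsteinPolynomial, ← h]
  exact sum_congr rfl fun k _ => by ring

end binomExp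

lemma mul_log_add_sub_le_mul_log {x μ : ℝ} (hx : 0 ≤ x) (hμ : 0 < μ) :
    x * log μ + (x - μ) ≤ x * log x := by
  rcases hx.eq_or_lt with rfl | hx
  · simpa using hμ.le
  have h : x * log (μ / x) ≤ x * (μ / x - 1) :=
    mul_le_mul_of_nonneg_left (log_le_sub_one_of_pos (div_pos hμ hx)) hx.le
  rw [log_div hμ.ne' hx.ne', mul_sub_one, mul_div_cancel₀ _ hx.ne'] at h
  linarith

lemma mul_log_le_mul_log_add_sub_add_sq_div {x μ : ℝ} (hx : 0 ≤ x) (hμ : 0 < μ) :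
    x * log x ≤ x * log μ + (x - μ) + (x - μ) ^ 2 / μ := by
  rcases hx.eq_or_lt with rfl | hx
  · simp [sq, hμ.ne']
  have h : x * log (x / μ) ≤ x * (x / μ - 1) :=
    mul_le_mul_of_nonneg_left (log_le_sub_one_of_pos (div_pos hx hμ)) hx.le
  have hsq : x * (x / μ - 1) = (x - μ) + (x - μ) ^ 2 / μ := by field_simp; ring
  rw [log_div hx.ne' hμ.ne', hsq] at h
  linarith

noncomputable def binomMulLogExp (p : ℝ) (n : ℕ) : ℝ :=
  binomExp p n (fun k => (k : ℝ) * log k + ((n - k : ℕ) : ℝ) * log ((n - k : ℕ) : ℝ))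

section binomMulLogExp

variable {p : ℝ} {n : ℕ}

lemma mul_log_mul_add_mul_log_mul (hn : 0 < n) (hp₀ : 0 < p) (hp₁ : p < 1) :
    n * p * log (n * p) + n * (1 - p) * log (n * (1 - p)) = n * log n - n * binEntropy p := by
  have hn' : (n : ℝ) ≠ 0 := by positivity
  rw [log_mul hn' hp₀.ne', log_mul hn' (by linarith), binEntropy_eq_negMulLog_add_negMulLog_one_sub,
    negMulLog, negMulLog]
  ring

lemma sub_mul_binEntropy_le_binomMulLogExp (hn : 0 < n) (hp₀ : 0 < p) (hp₁ : p < 1) :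
    n * log n - n * binEntropy p ≤ binomMulLogExp p n := by
  have hμ : 0 < (n : ℝ) * p := by positivity
  have hν : 0 < (n : ℝ) * (1 - p) := mul_pos (by positivity) (by linarith)
  calc n * log n - n * binEntropy p
      = binomExp p n (fun k => n * log (n * (1 - p)) + (log (n * p) - log (n * (1 - p))) * k) := by
        rw [binomExp_affine, ← mul_log_mul_add_mul_log_mul hn hp₀ hp₁]
        ring
    _ ≤ binomMulLogExp p n := by
        refine binomExp_mono hp₀.le hp₁.le fun k hk => ?_
        have hk' : (k : ℝ) ≤ n := by exact_mod_cast hk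
        have h₁ := mul_log_add_sub_le_mul_log (Nat.cast_nonneg k) hμ
        have h₂ := mul_log_add_sub_le_mul_log (sub_nonneg.2 hk') hν
        rw [Nat.cast_sub hk]
        linarith

lemma binomMulLogExp_le_sub_mul_binEntropy_add_one (hn : 0 < n) (hp₀ : 0 < p) (hp₁ : p < 1) :
    binomMulLogExp p n ≤ n * log n - n * binEntropy p + 1 := by
  have hμ : 0 < (n : ℝ) * p := by positivity
  have hν : 0 < (n : ℝ) * (1 - p) := mul_pos (by positivity) (by linarith)
  have hq : 1 - p ≠ 0 := by linarith
  set a : ℝ := n * log (n * (1 - p))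
  set b : ℝ := log (n * p) - log (n * (1 - p))
  set c : ℝ := 1 / (n * p * (1 - p))
  calc binomMulLogExp p n
      ≤ binomExp p n (fun k => (a + b * k) + c * ((k : ℝ) - n * p) ^ 2) := by
        refine binomExp_mono hp₀.le hp₁.le fun k hk => ?_
        have hk' : (k : ℝ) ≤ n := by exact_mod_cast hk
        have h₁ := mul_log_le_mul_log_add_sub_add_sq_div (Nat.cast_nonneg k) hμ
        have h₂ := mul_log_le_mul_log_add_sub_add_sq_div (sub_nonneg.2 hk') hν
        have hc : ((k : ℝ) - n * p) ^ 2 / (n * p) + (n - k - n * (1 - p)) ^ 2 / (n * (1 - p))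
            = c * ((k : ℝ) - n * p) ^ 2 := by
          simp only [c]
          field_simp
          ring
        rw [Nat.cast_sub hk]
        linarith
    _ = n * log n - n * binEntropy p + 1 := by
        rw [binomExp_add p n (fun k => a + b * k) (fun k => c * ((k : ℝ) - n * p) ^ 2),
          binomExp_affine, binomExp_const_mul, binomExp_sub_mean_sq,
          ← mul_log_mul_add_mul_log_mul hn hp₀ hp₁]
        simp only [a, b, c]
        field_simp
        ring

end binomMulLogExp

lemma isBigO_binomMulLogExp_sub {p : ℝ} (hp₀ : 0 < p) (hp₁ : p < 1) :
    (fun n : ℕ => binomMulLogExp p n - (n * log n - n * binEntropy p))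
      =O[atTop] (fun _ => (1 : ℝ)) := by
  refine isBoundedUnder_of_eventually_le (a := 1) ?_ |>.isBigO_one ℝ
  filter_upwards [eventually_gt_atTop 0] with n hn
  rw [norm_eq_abs, abs_le]
  constructor <;> linarith [sub_mul_binEntropy_le_binomMulLogExp hn hp₀ hp₁,
    binomMulLogExp_le_sub_mul_binEntropy_add_one hn hp₀ hp₁]

lemma tendsto_natCast_mul_pow_pred {r : ℝ} (hr₀ : 0 ≤ r) (hr₁ : r < 1) :
    Tendsto (fun n : ℕ => n * r ^ (n - 1)) atTop (𝓝 0) := by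
  rw [← tendsto_add_atTop_iff_nat 1]
  simpa [add_mul] using (tendsto_self_mul_const_pow_of_lt_one hr₀ hr₁).add
    (tendsto_pow_atTop_nhds_zero_of_lt_one hr₀ hr₁)

lemma fin_two_weighted_sum_eq_add_mul_sub {w x : Fin 2 → ℝ} (hw : w 0 + w 1 = 1) (i : Fin 2) :
    w 0 * x 0 + w 1 * x 1 = x i + w (1 - i) * (x (1 - i) - x i) := by
  fin_cases i
  · simp only [Fin.zero_eta, sub_zero]
    linear_combination x 0 * hw
  · simp only [Fin.mk_one, sub_self]
    linear_combination x 1 * hw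

theorem stmt10_general (p : Fin 2 → Fin 2 → ℝ)
    (hp : ∀ i j, p i j ∈ Set.Ioo (0 : ℝ) 1)
    (hsum : ∀ i, p i 0 + p i 1 = 1)
    (pi' H' : Fin 2 → ℝ) (H : ℝ)
    (hpi0 : pi' 0 = p 1 0 / (p 0 1 + p 1 0))
    (hpi1 : pi' 1 = p 0 1 / (p 0 1 + p 1 0))
    (hH' : ∀ i, H' i = -(p i 0 * Real.log (p i 0)) - p i 1 * Real.log (p i 1))
    (hH : H = pi' 0 * H' 0 + pi' 1 * H' 1) (hHpos : 0 < H)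
    (η η₂ : Fin 2 → ℕ → ℝ)
    (hη : ∀ i : Fin 2, ∀ n : ℕ, 2 ≤ n →
      η i n = 1 / H * ((n : ℝ) * Real.log n
          - binomExp (p i 0) n
              (fun k => (k : ℝ) * Real.log k + ((n - k : ℕ) : ℝ) * Real.log ((n - k : ℕ) : ℝ)))
        + pi' (1 - i) * ((H' (1 - i) - H' i) / H) * n
        + (H' 1 - H' 0) / ((p 0 1 + p 1 0) * H) * p i 0 * p i 1 ^ (n - 1) * n)
    (hη₂ : ∀ i : Fin 2, ∀ n : ℕ, 2 ≤ n → η₂ i n = n - η i n) :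
    ∀ i : Fin 2, (fun n : ℕ => η₂ i n) =O[atTop] (fun n : ℕ => Real.log n) := by
  intro i
  obtain ⟨hp₀, hp₁⟩ := hp i 0
  have hHi : H' i = binEntropy (p i 0) := by
    rw [hH', show p i 1 = 1 - p i 0 by linarith [hsum i],
      binEntropy_eq_negMulLog_add_negMulLog_one_sub, negMulLog, negMulLog]
    ring
  have hrate : p 0 1 + p 1 0 ≠ 0 := by linarith [(hp 0 1).1, (hp 1 0).1]
  have hπ : pi' 0 + pi' 1 = 1 := by rw [hpi0, hpi1, ← add_div, add_comm, div_self hrate]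
  have hmix : H' i + pi' (1 - i) * (H' (1 - i) - H' i) = H :=
    hH ▸ (fin_two_weighted_sum_eq_add_mul_sub hπ i).symm
  have hη₂_eq : ∀ᶠ n : ℕ in atTop, η₂ i n =
      H⁻¹ * (binomMulLogExp (p i 0) n - (n * log n - n * binEntropy (p i 0)))
        - (H' 1 - H' 0) / ((p 0 1 + p 1 0) * H) * p i 0 * (n * p i 1 ^ (n - 1)) := by
    filter_upwards [eventually_ge_atTop 2] with n hn
    have hsplit : (n : ℝ) = (n * H' i + pi' (1 - i) * (H' (1 - i) - H' i) * n) / H := by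
      rw [eq_div_iff hHpos.ne']
      linear_combination -(n : ℝ) * hmix
    rw [hη₂ i n hn, hη i n hn, ← binomMulLogExp, ← hHi]
    linear_combination hsplit
  have hbounded : (fun n : ℕ => η₂ i n) =O[atTop] (fun _ => (1 : ℝ)) :=
    IsBigO.congr' (((isBigO_binomMulLogExp_sub hp₀ hp₁).const_mul_left H⁻¹).sub
      (((tendsto_natCast_mul_pow_pred (hp i 1).1.le (hp i 1).2).const_mul _).isBigO_one ℝ))
      (hη₂_eq.mono fun _ h => h.symm) EventuallyEq.rfl
  exact hbounded.trans (isLittleO_const_log_atTop.comp_tendsto tendsto_natCast_atTop_atTop).isBigO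

theorem stmt10 (p : Fin 2 → Fin 2 → ℝ)
    (hp : ∀ i j, p i j ∈ Set.Ioo (0 : ℝ) 1)
    (hsum : ∀ i, p i 0 + p i 1 = 1)
    (pi' H' : Fin 2 → ℝ) (H : ℝ)
    (hpi0 : pi' 0 = p 1 0 / (p 0 1 + p 1 0))
    (hpi1 : pi' 1 = p 0 1 / (p 0 1 + p 1 0))
    (hH' : ∀ i, H' i = -(p i 0 * Real.log (p i 0)) - p i 1 * Real.log (p i 1))
    (hH : H = pi' 0 * H' 0 + pi' 1 * H' 1) (hHpos : 0 < H)
    (η η₂ : Fin 2 → ℕ → ℝ)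
    (hη0 : ∀ i : Fin 2, ∀ n : ℕ, n ≤ 1 → η i n = 0)
    (hη : ∀ i : Fin 2, ∀ n : ℕ, 2 ≤ n →
      η i n = 1 / H * ((n : ℝ) * Real.log n
          - binomExp (p i 0) n
              (fun k => (k : ℝ) * Real.log k + ((n - k : ℕ) : ℝ) * Real.log ((n - k : ℕ) : ℝ)))
        + pi' (1 - i) * ((H' (1 - i) - H' i) / H) * n
        + (H' 1 - H' 0) / ((p 0 1 + p 1 0) * H) * p i 0 * p i 1 ^ (n - 1) * n)
    (hη₂0 : ∀ i : Fin 2, ∀ n : ℕ, n ≤ 1 → η₂ i n = 0)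
    (hη₂ : ∀ i : Fin 2, ∀ n : ℕ, 2 ≤ n → η₂ i n = n - η i n) :
    ∀ i : Fin 2, (fun n : ℕ => η₂ i n) =O[atTop] (fun n : ℕ => Real.log n) :=
  stmt10_general p hp hsum pi' H' H hpi0 hpi1 hH' hH hHpos η η₂ hη hη₂
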